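/- arXiv:1202.3695 — 6 statements merged into one kernel-verified Lean document; each statement's English description precedes it below -/
import Mathlib

section
/- For every positive integer k, 5 divides J_k if and only if k ≡ 6 (mod 24). -/
/-- The sequence `J_k = Norm((1+2α^k))` with `α = (1+√-7)/2`, defined by its linear
recurrence with `J 0 = 9`, `J 1 = J 2 = 11`, `J 3 = 23` (so `J 4 = 67`). -/
def J : ℕ → ℤ
  | 0 => 9
  | 1 => 11
  | 2 => 11
  | 3 => 23
  | (k + 4) => 4 * J (k + 3) - 7 * J (k + 2) + 8 * J (k + 1) - 4 * J k

lemma J_step (k : ℕ) : J (k + 4) = 4 * J (k + 3) - 7 * J (k + 2) + 8 * J (k + 1) - 4 * J k := rfl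

lemma per4 : ∀ k : ℕ, ((J (k+24) : ZMod 5) = J k) ∧ ((J (k+25) : ZMod 5) = J (k+1))
    ∧ ((J (k+26) : ZMod 5) = J (k+2)) ∧ ((J (k+27) : ZMod 5) = J (k+3)) := by
  intro k
  induction k with
  | zero =>
    refine ⟨?_, ?_, ?_, ?_⟩ <;> · norm_num [J]; decide
  | succ n ih =>
    obtain ⟨h0, h1, h2, h3⟩ := ih
    refine ⟨h1, h2, h3, ?_⟩
    have e1 : n + 1 + 27 = (n + 24) + 4 := by omega
    have e2 : n + 1 + 3 = n + 4 := by omega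
    rw [e1, e2, J_step (n+24), J_step n]
    push_cast
    rw [show n + 24 + 3 = n + 27 from rfl, show n + 24 + 2 = n + 26 from rfl,
      show n + 24 + 1 = n + 25 from rfl, h0, h1, h2, h3]

lemma per_mul : ∀ (n r : ℕ), ((J (24 * n + r) : ZMod 5) = J r) := by
  intro n
  induction n with
  | zero => intro r; norm_num
  | succ m ih =>
    intro r
    have : 24 * (m + 1) + r = (24 * m + r) + 24 := by ring
    rw [this, (per4 (24 * m + r)).1, ih r]

theorem five_dvd_J_iff : ∀ k : ℕ, 0 < k → ((5 : ℤ) ∣ J k ↔ k % 24 = 6) := by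
  intro k _
  rw [show (5:ℤ) = ((5:ℕ):ℤ) from rfl, ← ZMod.intCast_zmod_eq_zero_iff_dvd]
  have hcast : ((J k : ZMod 5)) = (J (k % 24) : ZMod 5) := by
    conv_lhs => rw [show k = 24 * (k / 24) + k % 24 from (Nat.div_add_mod k 24).symm]
    exact per_mul _ _
  rw [hcast]
  have h : k % 24 < 24 := Nat.mod_lt _ (by norm_num)
  set r := k % 24 with hr
  clear_value r
  interval_cases r <;> norm_num [J] <;> decide
end

section
/- For every positive integer k, J_k ≡ 2 (mod 7) if k ≡ 0 (mod 3), and J_k ≡ 4 (mod 7) otherwise. -/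
def g (k : ℕ) : ℤ := if k % 3 = 0 then 2 else 4

lemma aux : ∀ k, J k % 7 = g k ∧ J (k+1) % 7 = g (k+1) ∧ J (k+2) % 7 = g (k+2)
    ∧ J (k+3) % 7 = g (k+3) := by
  intro k
  induction k with
  | zero => decide
  | succ n ih =>
    obtain ⟨h0, h1, h2, h3⟩ := ih
    refine ⟨h1, h2, h3, ?_⟩
    show (4 * J (n + 3) - 7 * J (n + 2) + 8 * J (n + 1) - 4 * J n) % 7 = g (n + 4)
    have hg : g (n + 4) = g (n + 1) := by
      unfold g; omega
    rw [hg]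
    unfold g at *
    split at h1 <;> split at h0 <;> split at h2 <;> split at h3 <;> omega

theorem J_mod_seven : ∀ k : ℕ, 0 < k →
    (k % 3 = 0 → J k % 7 = 2) ∧ (k % 3 ≠ 0 → J k % 7 = 4) := by
  intro k _
  have h := (aux k).1
  unfold g at h
  constructor <;> intro hk <;> simp [hk] at h <;> omega
end

section
/- For every integer k > 1, J_k ≡ 3 (mod 8) if k is even, and J_k ≡ 7 (mod 8) if k is odd. -/
lemma J_aux : ∀ k : ℕ, J (2*k) % 2 = 1 ∧ J (2*k+1) % 2 = 1 ∧
    J (2*k+2) % 8 = 3 ∧ J (2*k+3) % 8 = 7 := by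
  intro k
  induction k with
  | zero => norm_num [J]
  | succ n ih =>
    obtain ⟨h0, h1, h2, h3⟩ := ih
    have e4 : J (2*n+4) = 4 * J (2*n+3) - 7 * J (2*n+2) + 8 * J (2*n+1) - 4 * J (2*n) := rfl
    have e5 : J (2*n+5) = 4 * J (2*n+4) - 7 * J (2*n+3) + 8 * J (2*n+2) - 4 * J (2*n+1) := rfl
    have ha : J (2*n+4) % 8 = 3 := by omega
    have hb : J (2*n+5) % 8 = 7 := by omega
    refine ⟨?_, ?_, ?_, ?_⟩
    · show J (2*n+2) % 2 = 1; omega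
    · show J (2*n+3) % 2 = 1; omega
    · show J (2*n+4) % 8 = 3; exact ha
    · show J (2*n+5) % 8 = 7; exact hb

theorem J_mod_eight : ∀ k : ℕ, 1 < k →
    (Even k → J k % 8 = 3) ∧ (Odd k → J k % 8 = 7) := by
  intro k hk
  constructor
  · rintro ⟨m, rfl⟩
    have hm : 1 ≤ m := by omega
    obtain ⟨m', rfl⟩ := Nat.exists_eq_add_of_le hm
    have := (J_aux m').2.2.1
    have he : 1 + m' + (1 + m') = 2*m'+2 := by ring
    rw [he]
    exact this
  · rintro ⟨m, rfl⟩
    have hm : 1 ≤ m := by omega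
    obtain ⟨m', rfl⟩ := Nat.exists_eq_add_of_le hm
    have := (J_aux m').2.2.2
    have he : 2*(1+m')+1 = 2*m'+3 := by ring
    rw [he]
    exact this
end

section
/- For every integer k > 1, the Jacobi symbol (2 / J_k) equals 1 if k is odd and -1 if k is even. -/
lemma J_mod8 : ∀ k : ℕ, J (2*k+2) % 8 = 3 ∧ J (2*k+3) % 8 = 7 ∧
    J (2*k+4) % 8 = 3 ∧ J (2*k+5) % 8 = 7 := by
  intro k
  induction k with
  | zero => decide
  | succ n ih =>
    obtain ⟨h1, h2, h3, h4⟩ := ih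
    have e1 : J (2*n+6) = 4 * J (2*n+5) - 7 * J (2*n+4) + 8 * J (2*n+3) - 4 * J (2*n+2) := rfl
    have e2 : J (2*n+7) = 4 * J (2*n+6) - 7 * J (2*n+5) + 8 * J (2*n+4) - 4 * J (2*n+3) := rfl
    have h5 : J (2*n+6) % 8 = 3 := by omega
    have h6 : J (2*n+7) % 8 = 7 := by omega
    refine ⟨?_, ?_, ?_, ?_⟩ <;> (ring_nf; ring_nf at h3 h4 h5 h6) <;> omega

theorem jacobi_two_J : ∀ k : ℕ, 1 < k →
    jacobiSym 2 (J k).natAbs = if Odd k then 1 else -1 := by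
  intro k hk
  have hmod : J k % 8 = if Odd k then 7 else 3 := by
    rcases Nat.even_or_odd k with he | ho
    · obtain ⟨j, hj⟩ : ∃ j, k = 2*j+2 := ⟨k/2 - 1, by
        obtain ⟨m, hm⟩ := he; omega⟩
      rw [hj, if_neg (Nat.not_odd_iff_even.mpr ⟨j+1, by ring⟩)]
      exact (J_mod8 j).1
    · obtain ⟨j, hj⟩ : ∃ j, k = 2*j+3 := ⟨k/2 - 1, by
        obtain ⟨m, hm⟩ := ho; omega⟩
      rw [hj, if_pos ⟨j+1, by ring⟩]
      exact (J_mod8 j).2.1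
  have habs : (J k).natAbs % 8 = (if Odd k then 7 else 3 : ℕ) ∨
      (J k).natAbs % 8 = (if Odd k then 1 else 5 : ℕ) := by
    split_ifs at hmod ⊢ <;> omega
  have hodd2 : (J k).natAbs % 2 ≠ 0 := by
    split_ifs at habs <;> omega
  have hodd : Odd (J k).natAbs := Nat.odd_iff.mpr (by omega)
  rw [jacobiSym.at_two hodd, ZMod.χ₈_nat_eq_if_mod_eight, if_neg hodd2]
  split_ifs at habs ⊢ <;> omega
end

section
/- Let p ≠ 7 be an odd prime. Then the sequence J_k mod p is purely periodic, and its period equals the least common multiple of the multiplicative orders of the images of 2, α, and ᾱ in (O_K/𝔭)^×, where 𝔭 is a prime of O_K above p. -/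
/-- The ring of integers `O_K = ℤ[α]` of `K = ℚ(√-7)`, where `α = (1+√-7)/2`
is a root of `x² - x + 2`. -/
abbrev OK : Type := AdjoinRoot (Polynomial.X ^ 2 - Polynomial.X + 2 : Polynomial ℤ)

/-- `α = (1+√-7)/2 ∈ O_K`. -/
noncomputable abbrev alpha : OK := AdjoinRoot.root _

lemma alpha_rel : alpha ^ 2 - alpha + 2 = 0 := by
  have h : (AdjoinRoot.mk (Polynomial.X ^ 2 - Polynomial.X + 2 : Polynomial ℤ))
      (Polynomial.X ^ 2 - Polynomial.X + 2) = 0 := AdjoinRoot.mk_self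
  simpa [map_add, map_sub, map_pow, AdjoinRoot.mk_X, map_ofNat] using h

lemma J_eq : ∀ k, ((J k : OK)) = 1 + 2 * alpha ^ k + 2 * (1 - alpha) ^ k + 4 * 2 ^ k := by
  have h := alpha_rel
  intro k
  induction k using Nat.strong_induction_on with
  | _ k ih =>
    match k with
    | 0 => simp [J]; norm_num
    | 1 => simp [J]; ring_nf
    | 2 => show ((11 : ℤ) : OK) = _; linear_combination (-4 : OK) * h
    | 3 => show ((23 : ℤ) : OK) = _; linear_combination (-6 : OK) * h
    | (k + 4) =>
      show ((4 * J (k + 3) - 7 * J (k + 2) + 8 * J (k + 1) - 4 * J k : ℤ) : OK) = _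
      push_cast
      rw [ih (k+3) (by omega), ih (k+2) (by omega), ih (k+1) (by omega), ih k (by omega)]
      linear_combination (-2 * alpha ^ k * (alpha ^ 2 - 3 * alpha + 2)
        - 2 * (1 - alpha) ^ k * (alpha ^ 2 + alpha)) * h

set_option maxHeartbeats 2000000 in
theorem J_mod_p_periodic (p : ℕ) (hp : p.Prime) (hp2 : p ≠ 2) (hp7 : p ≠ 7)
    (𝔭 : Ideal OK) (h𝔭 : 𝔭.IsMaximal) (hp𝔭 : (p : OK) ∈ 𝔭)
    (u v w : (OK ⧸ 𝔭)ˣ)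
    (hu : (u : OK ⧸ 𝔭) = (2 : OK ⧸ 𝔭))
    (hv : (v : OK ⧸ 𝔭) = Ideal.Quotient.mk 𝔭 alpha)
    (hw : (w : OK ⧸ 𝔭) = Ideal.Quotient.mk 𝔭 (1 - alpha)) :
    (∀ k : ℕ, J (k + Nat.lcm (Nat.lcm (orderOf u) (orderOf v)) (orderOf w)) ≡ J k [ZMOD p]) ∧
    ∀ m : ℕ, 0 < m → (∀ k : ℕ, J (k + m) ≡ J k [ZMOD p]) →
      Nat.lcm (Nat.lcm (orderOf u) (orderOf v)) (orderOf w) ≤ m := by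
  haveI := h𝔭
  haveI := h𝔭.isPrime
  set q : OK →+* (OK ⧸ 𝔭) := Ideal.Quotient.mk 𝔭 with hqdef
  -- characteristic p
  have hp0 : ((p : ℕ) : OK ⧸ 𝔭) = 0 := by
    rw [← map_natCast q p]
    exact Ideal.Quotient.eq_zero_iff_mem.mpr hp𝔭
  have hchar : CharP (OK ⧸ 𝔭) p := by
    have hdvd : ringChar (OK ⧸ 𝔭) ∣ p := ringChar.dvd hp0
    have h1 : ringChar (OK ⧸ 𝔭) ≠ 1 := CharP.ringChar_ne_one
    have := (Nat.Prime.eq_one_or_self_of_dvd hp _ hdvd).resolve_left h1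
    have hcp := ringChar.charP (OK ⧸ 𝔭)
    rwa [this] at hcp
  -- image of J
  have hq2 : q (2 : OK) = (u : OK ⧸ 𝔭) := by rw [hu]; exact map_ofNat _ 2
  have hJq : ∀ k : ℕ, ((J k : ℤ) : OK ⧸ 𝔭)
      = 1 + 2 * (v : OK ⧸ 𝔭) ^ k + 2 * (w : OK ⧸ 𝔭) ^ k + 4 * (u : OK ⧸ 𝔭) ^ k := by
    intro k
    have : ((J k : ℤ) : OK ⧸ 𝔭) = q ((J k : ℤ) : OK) := (map_intCast q _).symm
    rw [this, J_eq]
    simp only [map_add, map_mul, map_pow, map_one, map_ofNat, hq2]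
    rw [← hv, ← hw, ← hq2, map_ofNat]
  -- helper: ModEq via R
  have hmod : ∀ a b : ℤ, ((a : OK ⧸ 𝔭) = (b : OK ⧸ 𝔭)) → a ≡ b [ZMOD p] := by
    intro a b hab
    have : ((a - b : ℤ) : OK ⧸ 𝔭) = 0 := by push_cast; rw [hab]; ring
    have := (CharP.intCast_eq_zero_iff (OK ⧸ 𝔭) p _).mp this
    exact (Int.modEq_iff_dvd.mpr this).symm
  constructor
  · intro k
    set L := Nat.lcm (Nat.lcm (orderOf u) (orderOf v)) (orderOf w) with hL
    have hud : orderOf u ∣ L := dvd_trans (Nat.dvd_lcm_left _ _) (Nat.dvd_lcm_left _ _)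
    have hvd : orderOf v ∣ L := dvd_trans (Nat.dvd_lcm_right _ _) (Nat.dvd_lcm_left _ _)
    have hwd : orderOf w ∣ L := Nat.dvd_lcm_right _ _
    have hu1 : ((u : OK ⧸ 𝔭)) ^ L = 1 := by
      rw [← Units.val_pow_eq_pow_val, orderOf_dvd_iff_pow_eq_one.mp hud, Units.val_one]
    have hv1 : ((v : OK ⧸ 𝔭)) ^ L = 1 := by
      rw [← Units.val_pow_eq_pow_val, orderOf_dvd_iff_pow_eq_one.mp hvd, Units.val_one]
    have hw1 : ((w : OK ⧸ 𝔭)) ^ L = 1 := by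
      rw [← Units.val_pow_eq_pow_val, orderOf_dvd_iff_pow_eq_one.mp hwd, Units.val_one]
    apply hmod
    rw [hJq, hJq, pow_add, pow_add, pow_add, hu1, hv1, hw1, mul_one, mul_one, mul_one]
  · intro m hm hper
    -- nonzero constants
    have h2 : (2 : OK ⧸ 𝔭) ≠ 0 := by
      intro h
      have : (p : ℕ) ∣ 2 := by
        have := (CharP.cast_eq_zero_iff (OK ⧸ 𝔭) p 2).mp (by exact_mod_cast h)
        exact this
      exact hp2 ((Nat.prime_dvd_prime_iff_eq hp Nat.prime_two).mp this)
    have h7 : (7 : OK ⧸ 𝔭) ≠ 0 := by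
      intro h
      have : (p : ℕ) ∣ 7 := (CharP.cast_eq_zero_iff (OK ⧸ 𝔭) p 7).mp (by exact_mod_cast h)
      exact hp7 ((Nat.prime_dvd_prime_iff_eq hp (by norm_num)).mp this)
    have h4 : (4 : OK ⧸ 𝔭) ≠ 0 := by
      have : (4 : OK ⧸ 𝔭) = 2 * 2 := by norm_num
      rw [this]; exact mul_ne_zero h2 h2
    have hVne : (v : OK ⧸ 𝔭) ≠ 0 := Units.ne_zero v
    have hWne : (w : OK ⧸ 𝔭) ≠ 0 := Units.ne_zero w
    -- relations
    have hsum : (v : OK ⧸ 𝔭) + (w : OK ⧸ 𝔭) = 1 := by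
      rw [hv, hw, ← map_add]; norm_num
    have hprod : (v : OK ⧸ 𝔭) * (w : OK ⧸ 𝔭) = (u : OK ⧸ 𝔭) := by
      have hαp : alpha * (1 - alpha) = 2 := by linear_combination -alpha_rel
      rw [hv, hw, ← map_mul, hαp, hq2]
    -- distinctness
    have hVW : (v : OK ⧸ 𝔭) - (w : OK ⧸ 𝔭) ≠ 0 := by
      intro h
      have hvw : (v : OK ⧸ 𝔭) = (w : OK ⧸ 𝔭) := sub_eq_zero.mp h
      apply h7
      have e2 : (v : OK ⧸ 𝔭) * (v : OK ⧸ 𝔭) = 2 := by rw [← hu, ← hprod, hvw]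
      have e1 : (v : OK ⧸ 𝔭) + (v : OK ⧸ 𝔭) = 1 := by rw [← hsum, hvw]
      linear_combination (2 * (v : OK ⧸ 𝔭) + 1) * e1 - 4 * e2
    have hVU : (v : OK ⧸ 𝔭) - (u : OK ⧸ 𝔭) ≠ 0 := by
      intro h
      have h' : (v : OK ⧸ 𝔭) = (u : OK ⧸ 𝔭) := sub_eq_zero.mp h
      have : (v : OK ⧸ 𝔭) * ((w : OK ⧸ 𝔭) - 1) = 0 := by linear_combination hprod - h'
      rcases mul_eq_zero.mp this with h0 | h0
      · exact hVne h0
      · have hw1 : (w : OK ⧸ 𝔭) = 1 := by linear_combination h0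
        apply hVne
        linear_combination hsum - hw1
    have hWU : (w : OK ⧸ 𝔭) - (u : OK ⧸ 𝔭) ≠ 0 := by
      intro h
      have h' : (w : OK ⧸ 𝔭) = (u : OK ⧸ 𝔭) := sub_eq_zero.mp h
      have : (w : OK ⧸ 𝔭) * ((v : OK ⧸ 𝔭) - 1) = 0 := by linear_combination hprod - h'
      rcases mul_eq_zero.mp this with h0 | h0
      · exact hWne h0
      · have hv1 : (v : OK ⧸ 𝔭) = 1 := by linear_combination h0
        apply hWne
        linear_combination hsum - hv1
    -- the key family of equations
    have key : ∀ k : ℕ,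
        (v : OK ⧸ 𝔭) ^ k * (2 * ((v : OK ⧸ 𝔭) ^ m - 1)) + (w : OK ⧸ 𝔭) ^ k * (2 * ((w : OK ⧸ 𝔭) ^ m - 1))
          + (u : OK ⧸ 𝔭) ^ k * (4 * ((u : OK ⧸ 𝔭) ^ m - 1)) = 0 := by
      intro k
      have h := hper k
      have hdvd : (p : ℤ) ∣ (J (k + m) - J k) := Int.ModEq.dvd h.symm
      have h0 : ((J (k + m) - J k : ℤ) : OK ⧸ 𝔭) = 0 := (CharP.intCast_eq_zero_iff (OK ⧸ 𝔭) p _).mpr hdvd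
      push_cast at h0
      rw [hJq, hJq, pow_add, pow_add, pow_add] at h0
      linear_combination h0
    have e0 := key 0
    have e1 := key 1
    have e2 := key 2
    simp only [pow_zero, pow_one, pow_two, one_mul] at e0 e1 e2
    -- solve the linear system
    have hX : 2 * ((v : OK ⧸ 𝔭) ^ m - 1) = 0 := by
      have hfac : (2 * ((v : OK ⧸ 𝔭) ^ m - 1)) * (((v : OK ⧸ 𝔭) - (w : OK ⧸ 𝔭)) * ((v : OK ⧸ 𝔭) - (u : OK ⧸ 𝔭))) = 0 := by
        linear_combination e2 - ((w : OK ⧸ 𝔭) + (u : OK ⧸ 𝔭)) * e1 + (w : OK ⧸ 𝔭) * (u : OK ⧸ 𝔭) * e0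
      rcases mul_eq_zero.mp hfac with h0 | h0
      · exact h0
      · exact absurd h0 (mul_ne_zero hVW hVU)
    have hY : 2 * ((w : OK ⧸ 𝔭) ^ m - 1) = 0 := by
      have hfac : (2 * ((w : OK ⧸ 𝔭) ^ m - 1)) * (((w : OK ⧸ 𝔭) - (v : OK ⧸ 𝔭)) * ((w : OK ⧸ 𝔭) - (u : OK ⧸ 𝔭))) = 0 := by
        linear_combination e2 - ((v : OK ⧸ 𝔭) + (u : OK ⧸ 𝔭)) * e1 + (v : OK ⧸ 𝔭) * (u : OK ⧸ 𝔭) * e0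
      rcases mul_eq_zero.mp hfac with h0 | h0
      · exact h0
      · refine absurd h0 (mul_ne_zero (fun hh => hVW ?_) hWU)
        linear_combination -hh
    have hZ : 4 * ((u : OK ⧸ 𝔭) ^ m - 1) = 0 := by
      have hfac : (4 * ((u : OK ⧸ 𝔭) ^ m - 1)) * (((u : OK ⧸ 𝔭) - (v : OK ⧸ 𝔭)) * ((u : OK ⧸ 𝔭) - (w : OK ⧸ 𝔭))) = 0 := by
        linear_combination e2 - ((v : OK ⧸ 𝔭) + (w : OK ⧸ 𝔭)) * e1 + (v : OK ⧸ 𝔭) * (w : OK ⧸ 𝔭) * e0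
      rcases mul_eq_zero.mp hfac with h0 | h0
      · exact h0
      · refine absurd h0 (mul_ne_zero (fun hh => hVU ?_) (fun hh => hWU ?_))
        · linear_combination -hh
        · linear_combination -hh
    have hVm : (v : OK ⧸ 𝔭) ^ m = 1 := by
      have := (mul_eq_zero.mp hX).resolve_left h2
      linear_combination this
    have hWm : (w : OK ⧸ 𝔭) ^ m = 1 := by
      have := (mul_eq_zero.mp hY).resolve_left h2
      linear_combination this
    have hUm : (u : OK ⧸ 𝔭) ^ m = 1 := by
      have := (mul_eq_zero.mp hZ).resolve_left h4
      linear_combination this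
    have hvu : v ^ m = 1 := Units.ext (by rw [Units.val_pow_eq_pow_val, hVm, Units.val_one])
    have hwu : w ^ m = 1 := Units.ext (by rw [Units.val_pow_eq_pow_val, hWm, Units.val_one])
    have huu : u ^ m = 1 := Units.ext (by rw [Units.val_pow_eq_pow_val, hUm, Units.val_one])
    exact Nat.le_of_dvd hm (Nat.lcm_dvd (Nat.lcm_dvd (orderOf_dvd_of_pow_eq_one huu)
      (orderOf_dvd_of_pow_eq_one hvu)) (orderOf_dvd_of_pow_eq_one hwu))
end

section
/- For every positive integer k, the integer J_k is prime if and only if the element j_k = 1 + 2α^k is prime in the ring ℤ[α], where α = (1+√-7)/2. -/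
namespace JAux
open Polynomial

lemma hf_monic : (X ^ 2 - X + 2 : ℤ[X]).Monic := by monicity!
lemma hf_deg : (X ^ 2 - X + 2 : ℤ[X]).natDegree = 2 := by compute_degree!

noncomputable def B : Module.Basis (Fin 2) ℤ OK :=
  (AdjoinRoot.powerBasis' hf_monic).basis.reindex (finCongr (by simp [hf_deg]))

lemma B_apply (i : Fin 2) : B i = alpha ^ (i : ℕ) := by
  rw [B, Module.Basis.reindex_apply, PowerBasis.basis_eq_pow, AdjoinRoot.powerBasis'_gen]
  congr 1

lemma alpha_sq : alpha ^ 2 = alpha - 2 := by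
  have h := AdjoinRoot.mk_self (f := (X ^ 2 - X + 2 : ℤ[X]))
  have h2 : (AdjoinRoot.mk (X ^ 2 - X + 2 : ℤ[X])) (X ^ 2 - X + 2) = alpha ^ 2 - alpha + 2 := by
    simp [map_add, map_sub, map_pow, map_ofNat]
  rw [h2] at h
  linear_combination h

noncomputable def el (c d : ℤ) : OK := (c : OK) + (d : OK) * alpha

lemma el_mul (c d u v : ℤ) : el c d * el u v = el (c*u - 2*d*v) (c*v + d*u + d*v) := by
  simp only [el]
  push_cast
  linear_combination ((d : OK) * v) * alpha_sq

lemma el_zero {c d : ℤ} (h : el c d = 0) : c = 0 ∧ d = 0 := by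
  have hB0 : B 0 = 1 := by rw [B_apply]; norm_num
  have hB1 : B 1 = alpha := by rw [B_apply]; norm_num
  have h0 : c • B 0 + d • B 1 = 0 := by
    rw [hB0, hB1, zsmul_eq_mul, zsmul_eq_mul, mul_one]; exact h
  have h2 := congrArg B.repr h0
  rw [map_add, map_zsmul, map_zsmul, B.repr_self, B.repr_self, map_zero] at h2
  constructor
  · have := DFunLike.congr_fun h2 0
    simpa using this
  · have := DFunLike.congr_fun h2 1
    simpa using this

lemma el_surj (z : OK) : ∃ c d : ℤ, z = el c d := by
  refine ⟨B.repr z 0, B.repr z 1, ?_⟩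
  have h := B.sum_repr z
  rw [Fin.sum_univ_two] at h
  conv_lhs => rw [← h]
  simp only [el, B_apply, pow_zero, pow_one, zsmul_eq_mul, mul_one, Fin.val_zero, Fin.val_one]

lemma el_inj {c d u v : ℤ} (h : el c d = el u v) : c = u ∧ d = v := by
  have : el (c - u) (d - v) = 0 := by
    simp only [el] at h ⊢
    push_cast
    linear_combination h
  obtain ⟨h1, h2⟩ := el_zero this
  omega

lemma nm_dvd {c d u v : ℤ} (h : el c d ∣ el u v) :
    (c^2 + c*d + 2*d^2) ∣ (u^2 + u*v + 2*v^2) := by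
  obtain ⟨w, hw⟩ := h
  obtain ⟨e, f, rfl⟩ := el_surj w
  rw [el_mul] at hw
  obtain ⟨h1, h2⟩ := el_inj hw
  exact ⟨e^2 + e*f + 2*f^2, by rw [h1, h2]; ring⟩

def ab : ℕ → ℤ × ℤ
  | 0 => (1, 0)
  | (k + 1) => (-2 * (ab k).2, (ab k).1 + (ab k).2)

lemma nm_ab (k : ℕ) : (ab k).1 ^ 2 + (ab k).1 * (ab k).2 + 2 * (ab k).2 ^ 2 = 2 ^ k := by
  induction k with
  | zero => simp [ab]
  | succ k ih => simp only [ab, pow_succ]; ring_nf; ring_nf at ih; linarith [ih]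

lemma J_closed (k : ℕ) : J k = 1 + 2 * (2 * (ab k).1 + (ab k).2) + 4 * 2 ^ k := by
  induction k using Nat.strong_induction_on with
  | _ k ih =>
    match k with
    | 0 => simp [J, ab]
    | 1 => simp [J, ab]
    | 2 => norm_num [J, ab]
    | 3 => norm_num [J, ab]
    | (k + 4) =>
      rw [J, ih (k+3) (by omega), ih (k+2) (by omega), ih (k+1) (by omega), ih k (by omega)]
      simp only [ab]
      ring

lemma b_odd (k : ℕ) : Even ((ab (k+1)).1) ∧ Odd ((ab (k+1)).2) := by
  induction k with
  | zero => simp [ab]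
  | succ k ih =>
    obtain ⟨h1, h2⟩ := ih
    constructor
    · exact ⟨-(ab (k+1)).2, by show -2 * (ab (k+1)).2 = _; ring⟩
    · show Odd ((ab (k+1)).1 + (ab (k+1)).2)
      exact h1.add_odd h2

lemma pow_alpha (n : ℕ) : alpha ^ n = el (ab n).1 (ab n).2 := by
  induction n with
  | zero => simp [ab, el]
  | succ n ih =>
    rw [pow_succ, ih, show alpha = el 0 1 by simp [el], el_mul]
    simp only [ab]
    ring_nf

end JAux

open JAux Polynomial in
theorem J_prime_iff_j_prime (k : ℕ) (hk : 0 < k) :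
    Prime (J k) ↔ Prime (1 + 2 * alpha ^ k) := by
  obtain ⟨k, rfl⟩ : ∃ m, k = m + 1 := ⟨k - 1, by omega⟩
  obtain ⟨a, b, hab⟩ : ∃ a b : ℤ, ab (k+1) = (a, b) := ⟨_, _, rfl⟩
  have hbodd : Odd b := by have := (b_odd k).2; rw [hab] at this; exact this
  have h2 : a^2 + a*b + 2*b^2 = 2^(k+1) := by
    have := nm_ab (k+1); rw [hab] at this; exact this
  obtain ⟨c, hc⟩ : ∃ c : ℤ, 1 + 2*a = c := ⟨_, rfl⟩
  obtain ⟨d, hd'⟩ : ∃ d : ℤ, 2*b = d := ⟨_, rfl⟩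
  have hx : (1 : OK) + 2 * alpha ^ (k+1) = el c d := by
    rw [pow_alpha, hab]
    simp only [el]
    rw [← hc, ← hd']
    push_cast
    ring
  have hJ : J (k+1) = c^2 + c*d + 2*d^2 := by
    have hJc := J_closed (k+1)
    rw [hab] at hJc
    rw [hJc, ← hc, ← hd']
    linear_combination -4 * h2
  have hbne : b ≠ 0 := by
    rintro rfl
    exact (Int.not_odd_iff_even.mpr Even.zero) hbodd
  have hd : d ≠ 0 := by rw [← hd']; simp [hbne]
  have hb2 : 1 ≤ b ^ 2 := by
    rcases lt_or_gt_of_ne hbne with h | h <;> nlinarith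
  have hJ7 : 7 ≤ J (k+1) := by
    rw [hJ, ← hc, ← hd']
    nlinarith [sq_nonneg (2*(1 + 2*a) + 2*b), hb2]
  rw [hx]
  constructor
  · -- J prime → el c d prime
    intro hp
    have hP : Nat.Prime (J (k+1)).natAbs := Int.prime_iff_natAbs_prime.mp hp
    haveI : Fact (Nat.Prime (J (k+1)).natAbs) := ⟨hP⟩
    set P : ℕ := (J (k+1)).natAbs with hP'
    have hpP : (P : ℤ) = J (k+1) := Int.natAbs_of_nonneg (by omega)
    have hpd : ¬ ((J (k+1)) ∣ d) := by
      intro hdvd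
      obtain ⟨f, hf⟩ := hdvd
      have hc2 : J (k+1) ∣ c^2 := by
        refine ⟨1 - c*f - 2*(J (k+1))*f^2, ?_⟩
        have hJ2 := hJ
        rw [hf] at hJ2
        linear_combination -hJ2
      have hcdvd : J (k+1) ∣ c := hp.dvd_of_dvd_pow hc2
      obtain ⟨e, he⟩ := hcdvd
      have hpp : J (k+1) * J (k+1) ∣ J (k+1) := by
        refine ⟨e^2 + e*f + 2*f^2, ?_⟩
        have hJ2 := hJ
        rw [he, hf] at hJ2
        linear_combination hJ2
      obtain ⟨m, hm⟩ := hpp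
      rw [mul_assoc] at hm
      have h1 : (1 : ℤ) = J (k+1) * m :=
        mul_left_cancel₀ hp.ne_zero (by linarith [hm])
      exact hp.not_isUnit (IsUnit.of_mul_eq_one m h1.symm)
    have hd0 : ((d : ℤ) : ZMod P) ≠ 0 := by
      rw [Ne, ZMod.intCast_zmod_eq_zero_iff_dvd, hpP]
      exact hpd
    have hJ0 : ((J (k+1) : ℤ) : ZMod P) = 0 := by
      rw [ZMod.intCast_zmod_eq_zero_iff_dvd, hpP]
    have key : ((c : ZMod P))^2 + (c : ZMod P) * (d : ZMod P) + 2 * (d : ZMod P)^2 = 0 := by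
      rw [hJ] at hJ0
      push_cast at hJ0
      exact hJ0
    obtain ⟨t, htdef⟩ : ∃ t : ZMod P, -(c : ZMod P) * ((d : ZMod P))⁻¹ = t := ⟨_, rfl⟩
    have htd : t * (d : ZMod P) = -(c : ZMod P) := by
      rw [← htdef, neg_mul, neg_mul, mul_assoc, inv_mul_cancel₀ hd0, mul_one]
    have hroot : (X ^ 2 - X + 2 : ℤ[X]).eval₂ (Int.castRingHom (ZMod P)) t = 0 := by
      have hm : ((d : ZMod P))^2 * (t^2 - t + 2) = 0 := by
        linear_combination key + (t * (d : ZMod P) - (c : ZMod P) - (d : ZMod P)) * htd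
      have h4 := (mul_eq_zero.mp hm).resolve_left (pow_ne_zero 2 hd0)
      simp only [eval₂_add, eval₂_sub, eval₂_pow, eval₂_X]
      rw [show ((2 : ℤ[X]).eval₂ (Int.castRingHom (ZMod P)) t) = 2 by
        rw [show (2 : ℤ[X]) = Polynomial.C 2 by norm_num, eval₂_C]; norm_num]
      linear_combination h4
    obtain ⟨ψ, hψdef⟩ : ∃ ψ : OK →+* ZMod P,
        AdjoinRoot.lift (Int.castRingHom (ZMod P)) t hroot = ψ := ⟨_, rfl⟩
    have ψ_el : ∀ u v : ℤ, ψ (el u v) = (u : ZMod P) + (v : ZMod P) * t := by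
      intro u v
      rw [← hψdef]
      simp only [el, map_add, map_mul, map_intCast]
      rw [AdjoinRoot.lift_root]
    have hψx : ψ (el c d) = 0 := by
      rw [ψ_el]
      linear_combination htd
    have ker : ∀ z : OK, ψ z = 0 → el c d ∣ z := by
      intro z h0
      obtain ⟨u, v, rfl⟩ := el_surj z
      rw [ψ_el] at h0
      have hud : ((u : ZMod P)) * (d : ZMod P) - (v : ZMod P) * (c : ZMod P) = 0 := by
        linear_combination (d : ZMod P) * h0 - (v : ZMod P) * htd
      have h3 : ((u*c + u*d + 2*v*d : ℤ) : ZMod P) = 0 := by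
        have hm : (d : ZMod P) * ((u*c + u*d + 2*v*d : ℤ) : ZMod P) = 0 := by
          push_cast
          linear_combination ((c : ZMod P) + (d : ZMod P)) * hud + (v : ZMod P) * key
        exact (mul_eq_zero.mp hm).resolve_left hd0
      have hvc : ((v*c - u*d : ℤ) : ZMod P) = 0 := by
        push_cast
        linear_combination -hud
      obtain ⟨e, he⟩ : (J (k+1)) ∣ (u*c + u*d + 2*v*d) := by
        rw [← hpP]
        exact (ZMod.intCast_zmod_eq_zero_iff_dvd _ _).mp h3
      obtain ⟨g, hg⟩ : (J (k+1)) ∣ (v*c - u*d) := by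
        rw [← hpP]
        exact (ZMod.intCast_zmod_eq_zero_iff_dvd _ _).mp hvc
      refine ⟨el e g, ?_⟩
      rw [el_mul]
      have hne : J (k+1) ≠ 0 := hp.ne_zero
      have hu : u = c*e - 2*d*g := by
        apply mul_left_cancel₀ hne
        linear_combination c * he - 2 * d * hg + u * hJ
      have hv : v = c*g + d*e + d*g := by
        apply mul_left_cancel₀ hne
        linear_combination d * he + (c + d) * hg + v * hJ
      rw [← hu, ← hv]
    refine ⟨?_, ?_, ?_⟩
    · intro h0
      exact hd (el_zero h0).2
    · intro hu
      have hdvd : el c d ∣ el 1 0 := by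
        rw [show el 1 0 = 1 by simp [el]]
        exact hu.dvd
      have hnd := nm_dvd hdvd
      rw [← hJ] at hnd
      norm_num at hnd
      have := Int.le_of_dvd one_pos hnd
      omega
    · intro y z hyz
      obtain ⟨w, hw⟩ := hyz
      have h0 : ψ y * ψ z = 0 := by
        rw [← map_mul, hw, map_mul, hψx, zero_mul]
      rcases mul_eq_zero.mp h0 with h | h
      · exact Or.inl (ker y h)
      · exact Or.inr (ker z h)
  · -- el c d prime → J prime
    intro hp
    have hxp : el c d ∣ ((J (k+1) : ℤ) : OK) := by
      refine ⟨el (c + d) (-d), ?_⟩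
      rw [el_mul]
      have h1 : c*(c+d) - 2*d*(-d) = J (k+1) := by rw [hJ]; ring
      have h1b : c*(-d) + d*(c+d) + d*(-d) = 0 := by ring
      rw [h1, h1b]
      simp [el]
    obtain ⟨n, hnpos⟩ : ∃ n : ℕ, (n : ℤ) = J (k+1) :=
      ⟨(J (k+1)).toNat, Int.toNat_of_nonneg (by omega)⟩
    have hn0 : n ≠ 0 := by omega
    have hxn : el c d ∣ ((n : ℕ) : OK) := by
      rwa [show ((n : ℕ) : OK) = ((J (k+1) : ℤ) : OK) by rw [← hnpos]; push_cast; ring]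
    have hprod : ((n.primeFactorsList.map (fun q => ((q : ℕ) : OK))).prod : OK)
        = ((n : ℕ) : OK) := by
      rw [← Nat.cast_list_prod, Nat.prod_primeFactorsList hn0]
    have hdvd : ∃ x ∈ n.primeFactorsList.map (fun q => ((q : ℕ) : OK)), el c d ∣ x := by
      rw [← hp.dvd_prod_iff, hprod]
      exact hxn
    obtain ⟨x, hxmem, hdx⟩ := hdvd
    obtain ⟨q, hqmem, rfl⟩ := List.mem_map.mp hxmem
    have hq : Nat.Prime q := Nat.prime_of_mem_primeFactorsList hqmem
    have hqel : ((q : ℕ) : OK) = el (q : ℤ) 0 := by simp [el]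
    rw [hqel] at hdx
    have hnm : (J (k+1)) ∣ (q : ℤ)^2 := by
      have hnd := nm_dvd hdx
      rw [← hJ] at hnd
      simpa using hnd
    have hn_dvd : n ∣ q ^ 2 := by
      have hcast : (n : ℤ) ∣ ((q^2 : ℕ) : ℤ) := by rw [hnpos]; push_cast; exact hnm
      exact_mod_cast hcast
    obtain ⟨i, hi2, hni⟩ := (Nat.dvd_prime_pow hq).mp hn_dvd
    interval_cases i
    · exfalso
      rw [pow_zero] at hni
      omega
    · rw [pow_one] at hni
      rw [← hnpos, hni]
      exact Nat.prime_iff_prime_int.mp hq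
    · exfalso
      obtain ⟨y, hy⟩ := hdx
      obtain ⟨e, f, rfl⟩ := el_surj y
      rw [el_mul] at hy
      obtain ⟨h1, h1b⟩ := el_inj hy
      have hq0 : (q : ℤ) ≠ 0 := by exact_mod_cast hq.ne_zero
      have hnm2 : (q : ℤ)^2 = (J (k+1)) * (e^2 + e*f + 2*f^2) := by
        rw [hJ, h1]
        linear_combination ((c*e - 2*d*f) + 2*(c*f + d*e + d*f)) * h1b
      have hJq : J (k+1) = (q : ℤ)^2 := by
        rw [← hnpos, hni]; push_cast; ring
      have hfe : e^2 + e*f + 2*f^2 = 1 := by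
        rw [hJq] at hnm2
        have h5 : (q : ℤ)^2 * 1 = (q : ℤ)^2 * (e^2 + e*f + 2*f^2) := by linarith [hnm2]
        exact (mul_left_cancel₀ (pow_ne_zero 2 hq0) h5).symm
      have hf0 : f = 0 := by nlinarith [sq_nonneg (2*e + f), sq_nonneg f]
      have he0 : e ≠ 0 := by
        rintro rfl
        rw [hf0] at hfe
        norm_num at hfe
      rw [hf0] at h1b
      have hde : d * e = 0 := by linarith [h1b]
      rcases mul_eq_zero.mp hde with h | h
      · exact hd h
      · exact he0 h
end
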